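/- arXiv:2003.11648 — 5 statements merged into one kernel-verified Lean document; each statement's English description precedes it below -/
import Mathlib

section
/- Let R be a one-dimensional Noetherian local domain whose completion is reduced, with integral closure R̄ (which is then a finite R-module). For any non-zero element x of R, the length of R/xR equals the length of R̄/xR̄ as R-modules. -/
/-!
Let `A = R̄`. Multiplication by `x` is injective on `A`, so `xA/xR ≅ A/R`, and the two chains
`xR ⊆ R ⊆ A` and `xR ⊆ xA ⊆ A` give
`λ(A/xR) = λ(R/xR) + λ(A/R) = λ(A/R) + λ(A/xA)`.
Since `A` is a finite `R`-module inside `K`, a common denominator `b ≠ 0` kills `A/R`, so `A/R` is a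
finitely generated module over `R/bR`, which is Artinian because `dim R = 1`; thus `λ(A/R) < ∞`
can be cancelled.
-/

open IsLocalRing

/-- The length of an `R`-module `M`, defined as the Krull dimension of its lattice of
submodules (the supremum of lengths of strict chains of submodules), valued in `ℕ∞`. -/
noncomputable def rlength (R M : Type*) [Ring R] [AddCommGroup M] [Module R M] : ℕ∞ :=
  WithBot.unbotD 0 (Order.krullDim (Submodule R M))

open Submodule Pointwise nonZeroDivisors

theorem rlength_eq_length (R M : Type*) [Ring R] [AddCommGroup M] [Module R M] :
    rlength R M = Module.length R M := by
  rw [rlength, ← Module.coe_length, WithBot.unbotD_coe]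

theorem Module.length_quotient_map_eq_add {R M N : Type*} [Ring R] [AddCommGroup M] [Module R M]
    [AddCommGroup N] [Module R N] {f : N →ₗ[R] M} (hf : Function.Injective f)
    (P : Submodule R N) :
    length R (M ⧸ P.map f) = length R (N ⧸ P) + length R (M ⧸ LinearMap.range f) := by
  refine length_eq_add_of_exact (P.mapQ (P.map f) f (le_comap_map f P))
    (factor (LinearMap.map_le_range (f := f))) ?_ (factor_surjective _) ?_
  · rw [← LinearMap.ker_eq_bot, ker_mapQ, comap_map_eq_of_injective hf, mkQ_map_self]
  · intro q
    obtain ⟨y, rfl⟩ := (P.map f).mkQ_surjective q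
    rw [factor_mk, mkQ_apply, Quotient.mk_eq_zero]
    constructor
    · rintro ⟨a, rfl⟩
      exact ⟨P.mkQ a, rfl⟩
    · rintro ⟨a, ha⟩
      obtain ⟨a, rfl⟩ := P.mkQ_surjective a
      rw [mkQ_apply, mapQ_apply, mkQ_apply, Submodule.Quotient.eq] at ha
      obtain ⟨b, -, hb⟩ := ha
      exact ⟨a - b, by rw [map_sub, hb, sub_sub_cancel]⟩

theorem Module.length_quotSMulTop_eq_of_injective {R M N : Type*} [CommRing R] [AddCommGroup M]
    [Module R M] [AddCommGroup N] [Module R N] {f : N →ₗ[R] M} (hf : Function.Injective f)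
    (hfin : length R (M ⧸ LinearMap.range f) ≠ ⊤) {r : R} (hr : IsSMulRegular M r) :
    length R (QuotSMulTop r N) = length R (QuotSMulTop r M) := by
  have hN := length_quotient_map_eq_add hf (r • ⊤)
  have hM := length_quotient_map_eq_add (f := DistribSMul.toLinearMap R M r) hr
    (LinearMap.range f)
  rw [map_pointwise_smul, ← LinearMap.range_eq_map] at hN
  rw [← pointwise_smul_def, LinearMap.range_eq_map (DistribSMul.toLinearMap R M r),
    ← pointwise_smul_def] at hM
  exact WithTop.add_right_cancel hfin (hN.symm.trans (hM.trans (add_comm _ _)))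

theorem Ideal.restrictScalars_span_singleton_algebraMap {R A : Type*} [CommRing R] [CommRing A]
    [Algebra R A] (x : R) :
    (span {algebraMap R A x}).restrictScalars R = x • (⊤ : Submodule R A) := by
  ext a
  simp [mem_span_singleton', mem_smul_pointwise_iff_exists, Algebra.smul_def, mul_comm]

theorem Module.length_quotient_span_singleton_algebraMap (R A : Type*) [CommRing R] [CommRing A]
    [Algebra R A] (x : R) :
    length R (A ⧸ Ideal.span {algebraMap R A x}) = length R (QuotSMulTop x A) := by
  rw [← (Quotient.restrictScalarsEquiv R _).length_eq,
    Ideal.restrictScalars_span_singleton_algebraMap]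

theorem isFiniteLength_of_isTorsionBy {R M : Type*} [CommRing R] [IsNoetherianRing R]
    [Ring.KrullDimLE 1 R] [AddCommGroup M] [Module R M] [Module.Finite R M] {b : R}
    (hb : b ∈ R⁰) (h : Module.IsTorsionBy R M b) : IsFiniteLength R M := by
  have : IsArtinianRing (R ⧸ Ideal.span {b}) := isArtinian_of_tower R
    (isFiniteLength_iff_isNoetherian_isArtinian.mp
      (isFiniteLength_quotient_span_singleton R hb)).2
  let := h.module
  have : Module.Finite (R ⧸ Ideal.span {b}) M := Module.Finite.of_restrictScalars_finite R _ M
  have : IsArtinian R M :=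
    isArtinian_of_surjective_algebraMap (Ideal.Quotient.mk_surjective (I := Ideal.span {b}))
  exact isFiniteLength_iff_isNoetherian_isArtinian.mpr ⟨inferInstance, this⟩

theorem Subalgebra.exists_isTorsionBy_quotient_range {R K : Type*} [CommRing R] [Field K]
    [Algebra R K] [IsFractionRing R K] (S : Subalgebra R K) [Module.Finite R S] :
    ∃ b ∈ R⁰, Module.IsTorsionBy R (S ⧸ LinearMap.range (Algebra.linearMap R S)) b := by
  obtain ⟨b, hb, hbS⟩ := FractionalIdeal.isFractional_of_fg (S := R⁰)
    ((Module.Finite.iff_fg (N := Subalgebra.toSubmodule S)).mp ‹_›)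
  refine ⟨b, hb, fun q ↦ ?_⟩
  obtain ⟨a, rfl⟩ := mkQ_surjective _ q
  obtain ⟨c, hc⟩ := hbS a a.2
  rw [← map_smul, mkQ_apply, Quotient.mk_eq_zero]
  exact ⟨c, Subtype.ext hc⟩

theorem stmt0_general (R K : Type*) [CommRing R] [IsDomain R] [IsNoetherianRing R]
    (hdim : ringKrullDim R = 1)
    [Field K] [Algebra R K] [IsFractionRing R K]
    (hfin : Module.Finite R (integralClosure R K))
    (x : R) (hx : x ≠ 0) :
    rlength R (R ⧸ Ideal.span {x}) =
      rlength R ((integralClosure R K) ⧸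
        (Ideal.span {algebraMap R (integralClosure R K) x})) := by
  have : Ring.KrullDimLE 1 R := ⟨hdim.le⟩
  obtain ⟨b, hb, hb_tors⟩ := (integralClosure R K).exists_isTorsionBy_quotient_range
  have hx_reg : IsSMulRegular (integralClosure R K) x :=
    (isSMulRegular_algebraMap_iff (integralClosure R K)).mp
      (IsSMulRegular.of_ne_zero (by simpa using hx))
  rw [rlength_eq_length, rlength_eq_length, Module.length_quotient_span_singleton_algebraMap]
  refine (Module.length_quotient_span_singleton_algebraMap R R x).trans ?_
  exact Module.length_quotSMulTop_eq_of_injective (FaithfulSMul.algebraMap_injective R _)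
    (Module.length_ne_top_iff.mpr (isFiniteLength_of_isTorsionBy hb hb_tors)) hx_reg

/-- For a one-dimensional Noetherian local domain `R` with reduced completion and
module-finite integral closure `R̄`, and any nonzero `x ∈ R`, `λ(R/xR) = λ(R̄/xR̄)`. -/
theorem stmt0 (R K : Type*) [CommRing R] [IsDomain R] [IsNoetherianRing R] [IsLocalRing R]
    (hdim : ringKrullDim R = 1)
    [Field K] [Algebra R K] [IsFractionRing R K]
    (hred : IsReduced (AdicCompletion (maximalIdeal R) R))
    (hfin : Module.Finite R (integralClosure R K))
    (x : R) (hx : x ≠ 0) :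
    rlength R (R ⧸ Ideal.span {x}) =
      rlength R ((integralClosure R K) ⧸
        (Ideal.span {algebraMap R (integralClosure R K) x})) :=
  stmt0_general R K hdim hfin x hx
end

section
/- Let R be a reduced Noetherian ring with total ring of fractions K and module-finite integral closure R̄, and let 𝔠 = R:_K R̄ be the conductor. Then R̄ = R:_K 𝔠. -/
set_option synthInstance.maxHeartbeats 1000000
set_option maxHeartbeats 1000000

open IsLocalRing

/-!
In `Submodule` language the conductor is `𝔠 = 1 / R̄` and the claim is `R̄ = 1 / 𝔠`.
The inclusion `R̄ ≤ 1 / (1 / R̄)` is formal. Conversely, since `𝔠` is an ideal of `R̄`,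
every `α ∈ 1 / 𝔠` maps `𝔠` into itself. As `R̄` is a finite `R`-module it has a common
denominator `d ∈ R⁰`, i.e. `d ∈ 𝔠`, so `d αⁿ ∈ 𝔠 ⊆ R` for all `n`: `α` is almost integral,
and almost integral elements are integral over a Noetherian ring.
-/

open scoped nonZeroDivisors

namespace Submodule

variable {R A : Type*} [CommSemiring R] [CommSemiring A] [Algebra R A]

theorem le_one_div_one_div (I : Submodule R A) : I ≤ 1 / (1 / I) :=
  le_div_iff_mul_le.mpr mul_one_div_le_one

theorem one_div_one_div_mul_one_div_le {I : Submodule R A} (hI : I * I ≤ I) :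
    1 / (1 / I) * (1 / I) ≤ 1 / I := by
  have hI' : 1 / I * I ≤ 1 / I := le_div_iff_mul_le.mpr <|
    calc 1 / I * I * I = 1 / I * (I * I) := mul_assoc _ _ _
      _ ≤ 1 / I * I := mul_le_mul_right hI _
      _ ≤ 1 := (mul_comm _ _).trans_le mul_one_div_le_one
  refine le_div_iff_mul_le.mpr ?_
  calc 1 / (1 / I) * (1 / I) * I = 1 / (1 / I) * (1 / I * I) := mul_assoc _ _ _
    _ ≤ 1 / (1 / I) * (1 / I) := mul_le_mul_right hI' _
    _ ≤ 1 := (mul_comm _ _).trans_le mul_one_div_le_one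

end Submodule

section

open Submodule

variable {R A : Type*} [CommRing R] [CommRing A] [Algebra R A]

theorem isAlmostIntegral_of_mem_one_div_one_div (S : Subalgebra R A) {r : R} (hr : r ∈ R⁰)
    (hrS : algebraMap R A r ∈ 1 / Subalgebra.toSubmodule S) {x : A}
    (hx : x ∈ 1 / (1 / Subalgebra.toSubmodule S)) : IsAlmostIntegral R x := by
  have hmul := one_div_one_div_mul_one_div_le (S.isIdempotentElem_toSubmodule).le
  have hpow : ∀ n, x ^ n * algebraMap R A r ∈ 1 / Subalgebra.toSubmodule S := by
    intro n
    induction n with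
    | zero => simpa using hrS
    | succ n ih => simpa [pow_succ', mul_assoc] using hmul (mul_mem_mul hx ih)
  refine ⟨r, hr, fun n => ?_⟩
  obtain ⟨a, ha⟩ := mem_one.mp (hpow n 1 S.one_mem)
  exact ⟨a, by rw [ha, mul_one, Algebra.smul_def, mul_comm]⟩

theorem Submodule.FG.exists_mem_algebraMap_mem_one_div (M : Submonoid R) [IsLocalization M A]
    {I : Submodule R A} (hI : I.FG) : ∃ r ∈ M, algebraMap R A r ∈ 1 / I := by
  obtain ⟨r, hr, hrI⟩ := FractionalIdeal.isFractional_of_fg (S := M) hI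
  refine ⟨r, hr, fun y hy => ?_⟩
  obtain ⟨a, ha⟩ := hrI y hy
  exact mem_one.mpr ⟨a, by rw [ha, Algebra.smul_def]⟩

theorem toSubmodule_integralClosure_eq_one_div_one_div [IsNoetherianRing R]
    [IsFractionRing R A] (hfin : Module.Finite R (integralClosure R A)) :
    Subalgebra.toSubmodule (integralClosure R A) =
      1 / (1 / Subalgebra.toSubmodule (integralClosure R A)) := by
  refine le_antisymm (le_one_div_one_div _) fun x hx => ?_
  have hfg : (Subalgebra.toSubmodule (integralClosure R A)).FG := Module.Finite.iff_fg.mp hfin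
  obtain ⟨r, hr, hrS⟩ := hfg.exists_mem_algebraMap_mem_one_div R⁰
  refine (isAlmostIntegral_of_mem_one_div_one_div _ hr hrS hx)
    |>.isIntegral_of_nonZeroDivisors_le_comap fun s hs => ?_
  exact (IsLocalization.map_units A ⟨s, hs⟩).mem_nonZeroDivisors

end

theorem stmt3_general (R K : Type*) [CommRing R] [IsNoetherianRing R]
    [CommRing K] [Algebra R K] [IsFractionRing R K]
    (hfin : Module.Finite R (integralClosure R K)) :
    ∀ α : K, α ∈ integralClosure R K ↔
      (∀ γ : K, (∀ β ∈ integralClosure R K, ∃ r : R, algebraMap R K r = γ * β) →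
        ∃ r : R, algebraMap R K r = α * γ) := by
  intro α
  rw [← Subalgebra.mem_toSubmodule, toSubmodule_integralClosure_eq_one_div_one_div hfin]
  simp only [Submodule.mem_div_iff_forall_mul_mem, Submodule.mem_one, Subalgebra.mem_toSubmodule]

/-- for a reduced Noetherian ring with total quotient ring `K` and module-finite
integral closure `R̄`, with conductor `𝔠 = R :_K R̄`, one has `R̄ = R :_K 𝔠`. -/
theorem stmt3 (R K : Type*) [CommRing R] [IsReduced R] [IsNoetherianRing R]
    [CommRing K] [Algebra R K] [IsFractionRing R K]
    (hfin : Module.Finite R (integralClosure R K)) :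
    ∀ α : K, α ∈ integralClosure R K ↔
      (∀ γ : K, (∀ β ∈ integralClosure R K, ∃ r : R, algebraMap R K r = γ * β) →
        ∃ r : R, algebraMap R K r = α * γ) :=
  stmt3_general R K hfin
end

section
/- Let R be a zero-dimensional (Artinian) local ring with injective hull E of its residue field, and let J be an ideal of R. Then the annihilator of E/JE equals 0 :_R (0 :_R J). -/
/-!
Two properties of the injective module `E` suffice.

* `E` is faithful: a nonzero principal ideal `(r)` of the Artinian ring contains a minimal
  ideal `T ≅ k`; the embedding `T ≅ k ↪ E` extends to a map `R → E`, and if `r` killed `E`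
  it would kill the image of `T`.
* An element `x ∈ E` killed by `0 :_R J` lies in `JE`: for `J = (a₁, …, aₙ)` the map
  `r ↦ (r aᵢ)ᵢ` embeds `R/(0 :_R J)` into `Rⁿ`, so `1 ↦ x` extends to `Rⁿ → E` and `x` is
  the image of `(aᵢ)ᵢ = ∑ aᵢ eᵢ`.

Then `r E ⊆ JE` gives `r (0 :_R J) E ⊆ (0 :_R J) J E = 0`, hence `r (0 :_R J) = 0` by
faithfulness; conversely, if `r (0 :_R J) = 0` then each `r x` is killed by `0 :_R J`.
-/

open IsLocalRing

/-- `E` is an injective hull of the residue field over the local ring `A`: it is injective and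
an essential extension of a simple submodule. -/
def IsInjectiveHullOfSimple (A E : Type*) [CommRing A] [AddCommGroup E] [Module A E] : Prop :=
  Module.Injective A E ∧ ∃ S : Submodule A E, IsSimpleModule A S ∧
    ∀ N : Submodule A E, N ≠ ⊥ → N ⊓ S ≠ ⊥

universe u v w

theorem Submodule.small_of_small_quotient {R : Type u} [Ring R] {M : Type v} [AddCommGroup M]
    [Module R M] (N : Submodule R M) [hN : Small.{w} N] [hQ : Small.{w} (M ⧸ N)] :
    Small.{w} M :=
  have : Small.{w} (M ⧸ N.toAddSubgroup) := hQ
  have : Small.{w} N.toAddSubgroup := hN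
  small_of_injective N.toAddSubgroup.addGroupEquivQuotientProdAddSubgroup.injective

namespace IsLocalRing

variable {R : Type u} [CommRing R] [IsLocalRing R]

theorem nonempty_linearEquiv_of_isSimpleModule (M : Type v) [AddCommGroup M] [Module R M]
    [IsSimpleModule R M] : Nonempty (M ≃ₗ[R] R ⧸ maximalIdeal R) := by
  obtain ⟨I, hI, e⟩ := isSimpleModule_iff_quot_maximal.mp ‹IsSimpleModule R M›
  rwa [← eq_maximalIdeal hI]

theorem small_of_isFiniteLength [Small.{w} (R ⧸ maximalIdeal R)] {M : Type v} [AddCommGroup M]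
    [Module R M] (hM : IsFiniteLength R M) : Small.{w} M := by
  induction hM with
  | of_subsingleton => infer_instance
  | @of_simple_quotient M _ _ N _ _ ih =>
    obtain ⟨e⟩ := nonempty_linearEquiv_of_isSimpleModule (R := R) (M ⧸ N)
    have : Small.{w} (M ⧸ N) := small_of_injective e.injective
    exact N.small_of_small_quotient

/-- `Module.Injective R E` only tests modules in the universe of `E`, so extending maps out of `R`
or `Rⁿ` into `E` needs `R` to be small in that universe. -/
theorem small_of_isSimpleModule [IsArtinianRing R] (M : Type v) [AddCommGroup M] [Module R M]
    [IsSimpleModule R M] : Small.{v} R :=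
  have ⟨e⟩ := nonempty_linearEquiv_of_isSimpleModule (R := R) M
  have : Small.{v} (R ⧸ maximalIdeal R) := small_of_injective e.symm.injective
  small_of_isFiniteLength ((isArtinianRing_iff_isFiniteLength R).mp ‹_›)

end IsLocalRing

namespace Module.Injective

variable {R : Type u} [CommRing R] {E : Type v} [AddCommGroup E] [Module R E] [Small.{v} R]
  [Module.Injective R E]

theorem faithfulSMul_of_isSimpleModule [IsArtinianRing R] [IsLocalRing R] (S : Submodule R E)
    [IsSimpleModule R S] : FaithfulSMul R E := by
  rw [← Module.annihilator_eq_bot, eq_bot_iff]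
  intro r hr
  rw [Module.mem_annihilator] at hr
  rw [Submodule.mem_bot]
  by_contra hr0
  obtain ⟨T, hT, hTr⟩ := (IsAtomic.eq_bot_or_exists_atom_le (Ideal.span {r})).resolve_left
    (by simpa [Ideal.span_singleton_eq_bot] using hr0)
  have := isSimpleModule_iff_isAtom.mpr hT
  obtain ⟨eT⟩ := nonempty_linearEquiv_of_isSimpleModule (R := R) T
  obtain ⟨eS⟩ := nonempty_linearEquiv_of_isSimpleModule (R := R) S
  let ψ : T →ₗ[R] E := S.subtype ∘ₗ (eT.trans eS.symm).toLinearMap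
  obtain ⟨φ, hφ⟩ := extension_property R E T R T.subtype T.subtype_injective ψ
  have := IsSimpleModule.nontrivial R T
  obtain ⟨t, ht⟩ := exists_ne (0 : T)
  obtain ⟨a, hat⟩ := Ideal.mem_span_singleton'.mp (hTr t.2)
  have hφt : φ t = 0 := by
    rw [← hat, ← smul_eq_mul, map_smul, ← mul_one r, ← smul_eq_mul, map_smul, hr, smul_zero]
  have hψt : ψ t ≠ 0 := by simpa [ψ] using ht
  exact hψt (LinearMap.congr_fun hφ t ▸ hφt)

theorem mem_smul_top_of_annihilator_smul_eq_zero {J : Ideal R} (hJ : J.FG) {x : E}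
    (hx : ∀ s ∈ J.annihilator, s • x = 0) : x ∈ J • (⊤ : Submodule R E) := by
  obtain ⟨n, a, rfl⟩ := Submodule.fg_iff_exists_fin_generating_family.mp hJ
  let φ : R →ₗ[R] (Fin n → R) := LinearMap.pi fun i => LinearMap.toSpanSingleton R R (a i)
  have hker : LinearMap.ker φ ≤ LinearMap.ker (LinearMap.toSpanSingleton R E x) := by
    intro s hs
    refine hx s ((Submodule.mem_annihilator_span _ s).mpr ?_)
    rintro ⟨_, i, rfl⟩
    exact congrFun hs i
  let ι := (LinearMap.range φ).subtype ∘ₗ φ.quotKerEquivRange.toLinearMap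
  obtain ⟨g, hg⟩ := extension_property R E _ _ ι
    (Subtype.val_injective.comp φ.quotKerEquivRange.injective) ((LinearMap.ker φ).liftQ _ hker)
  have hgx : g (φ 1) = x := by
    simpa only [ι, LinearMap.comp_apply, LinearEquiv.coe_coe, LinearMap.quotKerEquivRange_apply_mk,
      Submodule.subtype_apply, Submodule.liftQ_apply, LinearMap.toSpanSingleton_apply, one_smul]
      using LinearMap.congr_fun hg (Submodule.Quotient.mk 1)
  have hφ : φ 1 = ∑ i, a i • Pi.single i 1 := by
    ext j
    simp [φ, Finset.sum_apply, Pi.single_apply]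
  rw [← hgx, hφ, map_sum]
  exact Submodule.sum_mem _ fun i _ => by
    rw [map_smul]
    exact Submodule.smul_mem_smul (Submodule.subset_span ⟨i, rfl⟩) trivial

end Module.Injective

/-- over an Artinian local ring `R` with `E` the injective hull of the residue
field, for any ideal `J` one has `Ann_R(E/JE) = 0 :_R (0 :_R J)`. -/
theorem stmt6 (R : Type*) [CommRing R] [IsArtinianRing R] [IsLocalRing R]
    (E : Type*) [AddCommGroup E] [Module R E] (hE : IsInjectiveHullOfSimple R E)
    (J : Ideal R) :
    (⊤ : Submodule R (E ⧸ (J • (⊤ : Submodule R E)))).annihilator =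
      Submodule.colon (⊥ : Ideal R) (Submodule.colon (⊥ : Ideal R) J) := by
  obtain ⟨hinj, S, hS, -⟩ := hE
  have := small_of_isSimpleModule (R := R) S
  have := hinj.faithfulSMul_of_isSimpleModule S
  have hkill : J.annihilator • (J • ⊤ : Submodule R E) = ⊥ := by
    rw [← Submodule.mul_smul, Submodule.annihilator_mul, Submodule.bot_smul]
  ext r
  rw [Submodule.bot_colon, Submodule.bot_colon, Submodule.mem_annihilator,
    Submodule.mem_annihilator]
  constructor
  · intro h s hs
    refine eq_of_smul_eq_smul (α := E) fun x => ?_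
    have hrx : r • x ∈ J • (⊤ : Submodule R E) := by
      simpa [← Submodule.Quotient.mk_smul] using h (Submodule.Quotient.mk x) trivial
    rw [zero_smul, smul_eq_mul, mul_comm, mul_smul, ← Submodule.mem_bot R, ← hkill]
    exact Submodule.smul_mem_smul hs hrx
  · intro h q _
    obtain ⟨x, rfl⟩ := Submodule.Quotient.mk_surjective _ q
    rw [← Submodule.Quotient.mk_smul, Submodule.Quotient.mk_eq_zero]
    refine hinj.mem_smul_top_of_annihilator_smul_eq_zero (IsNoetherian.noetherian J) fun s hs => ?_
    rw [smul_smul, mul_comm, ← smul_eq_mul, h s hs, zero_smul]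
end

section
/- Let R be a Noetherian one-dimensional local domain with reduced completion, and let I be a trace ideal of R (i.e., I = tr_R(M) for some module M, equivalently I = tr_R(I)). Then every ideal J isomorphic to I satisfies λ(R/J) ≥ λ(R/I); i.e., a regular trace ideal achieves minimal colength among its isomorphic copies. -/
set_option synthInstance.maxHeartbeats 1000000
set_option maxHeartbeats 1000000

open IsLocalRing

/-! An isomorphism `J ≅ I` exhibits `J` as the image of a map `I → R`, so `J ⊆ tr(I) = I`;
hence `R/J` surjects onto `R/I`, and length does not increase along surjections. -/

theorem rlength_le_of_surjective {R M N : Type*} [Ring R] [AddCommGroup M] [Module R M]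
    [AddCommGroup N] [Module R N] {f : M →ₗ[R] N} (hf : Function.Surjective f) :
    rlength R N ≤ rlength R M :=
  WithBot.unbotD_mono (Order.krullDim_ne_bot_iff.mpr inferInstance) <|
    Order.krullDim_le_of_strictMono _ (Submodule.comap_strictMono_of_surjective hf)

theorem rlength_quotient_le_of_le {R M : Type*} [Ring R] [AddCommGroup M] [Module R M]
    {p p' : Submodule R M} (h : p ≤ p') : rlength R (M ⧸ p') ≤ rlength R (M ⧸ p) :=
  rlength_le_of_surjective (Submodule.factor_surjective h)

theorem Submodule.le_iSup_range_of_linearEquiv {R M P : Type*} [Semiring R] [AddCommMonoid M]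
    [Module R M] [AddCommMonoid P] [Module R P] {N : Submodule R P} (e : N ≃ₗ[R] M) :
    N ≤ ⨆ f : M →ₗ[R] P, LinearMap.range f := by
  have hrange : LinearMap.range (N.subtype ∘ₗ (e.symm : M →ₗ[R] N)) = N := by
    rw [LinearMap.range_comp_of_range_eq_top _ e.symm.range, N.range_subtype]
  exact hrange ▸ le_iSup (fun f : M →ₗ[R] P => LinearMap.range f) _

theorem stmt9_general (R : Type*) [CommRing R]
    (I : Ideal R)
    (htr : I = ⨆ f : I →ₗ[R] R, LinearMap.range f)
    (J : Ideal R) (hiso : Nonempty (J ≃ₗ[R] I)) :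
    rlength R (R ⧸ I) ≤ rlength R (R ⧸ J) := by
  obtain ⟨e⟩ := hiso
  have hJI : J ≤ I := htr ▸ Submodule.le_iSup_range_of_linearEquiv e
  exact rlength_quotient_le_of_le hJI

/-- over a one-dimensional Noetherian local domain with reduced completion, a
non-zero trace ideal `I` (i.e. `I = tr_R(I)`) achieves the minimal colength among all ideals
isomorphic to it. -/
theorem stmt9 (R : Type*) [CommRing R] [IsDomain R] [IsNoetherianRing R] [IsLocalRing R]
    (hdim : ringKrullDim R = 1)
    (hred : IsReduced (AdicCompletion (maximalIdeal R) R))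
    (I : Ideal R) (hI : I ≠ ⊥)
    (htr : I = ⨆ f : I →ₗ[R] R, LinearMap.range f)
    (J : Ideal R) (hiso : Nonempty (J ≃ₗ[R] I)) :
    rlength R (R ⧸ I) ≤ rlength R (R ⧸ J) :=
  stmt9_general R I htr J hiso
end

section
/- Let k be a perfect field, S = k[[X_1,...,X_n]] with n ≥ 2, and R = S/I a one-dimensional complete local domain with I ⊆ n^{s+1} for some s ≥ 1, where n is the maximal ideal of S. Suppose the universally finite module of differentials Ω_{R/k} is torsion-free and J is an ideal of R with Ω_{R/k} ≅ J (equivalently J realizes Ω_{R/k}). Then J ⊆ m^s, where m is the maximal ideal of R. -/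
set_option synthInstance.maxHeartbeats 1000000
set_option maxHeartbeats 1000000

open IsLocalRing

/-- The universally finite module of differentials of `R = k[[X_1,…,X_n]]/I`, encoded via its
presentation `R^p → R^n → Ω → 0` by the (transposed) Jacobian matrix `A = (∂f_j/∂X_i)`. -/
abbrev OmegaOf (R : Type*) [CommRing R] {n p : ℕ} (A : Matrix (Fin n) (Fin p) R) :=
  (Fin n → R) ⧸ LinearMap.range (Matrix.toLin' A)

/-!
If `Ω ≅ J` is presented as `R^p →ᴬ R^n → Ω → 0`, the composite `f : R^n → Ω ≅ J ⊆ R` has kernel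
exactly the column space of `A`. For `i ≠ j` the Koszul relation
`f(e_j) e_i - f(e_i) e_j` lies in `ker f`, hence is `A w` for some `w`; its `i`-th coordinate
`f(e_j)` is therefore a combination of entries of `A`, so lies in `m^s`. Since the `f(e_j)`
generate `J`, we get `J ⊆ m^s`.
-/

section

variable {R : Type*} [CommRing R] {n p : ℕ}

theorem Matrix.toLin'_apply_mem_of_forall_mem {I : Ideal R} {A : Matrix (Fin n) (Fin p) R}
    (hA : ∀ i j, A i j ∈ I) (w : Fin p → R) (i : Fin n) : Matrix.toLin' A w i ∈ I := by
  simp only [Matrix.toLin'_apply, Matrix.mulVec, dotProduct]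
  exact Submodule.sum_mem _ fun j _ => I.mul_mem_right _ (hA i j)

theorem LinearMap.apply_single_mem_of_ker_le_range_toLin' {I : Ideal R}
    {A : Matrix (Fin n) (Fin p) R} (hA : ∀ i j, A i j ∈ I)
    {f : (Fin n → R) →ₗ[R] R} (hf : LinearMap.ker f ≤ LinearMap.range (Matrix.toLin' A))
    {i j : Fin n} (hij : i ≠ j) : f (Pi.single j 1) ∈ I := by
  set koszul : Fin n → R := f (Pi.single j 1) • Pi.single i 1 - f (Pi.single i 1) • Pi.single j 1
  have hkoszul : koszul ∈ LinearMap.ker f := by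
    simp only [koszul, LinearMap.mem_ker, map_sub, map_smul, smul_eq_mul]
    ring
  obtain ⟨w, hw⟩ := hf hkoszul
  have hcoord : koszul i = f (Pi.single j 1) := by
    simp [koszul, Pi.single_eq_of_ne hij]
  rw [← hcoord, ← hw]
  exact Matrix.toLin'_apply_mem_of_forall_mem hA w i

theorem LinearMap.range_le_of_ker_le_range_toLin' {I : Ideal R}
    {A : Matrix (Fin n) (Fin p) R} (hA : ∀ i j, A i j ∈ I) (hn : 2 ≤ n)
    {f : (Fin n → R) →ₗ[R] R} (hf : LinearMap.ker f ≤ LinearMap.range (Matrix.toLin' A)) :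
    LinearMap.range f ≤ I := by
  have : Nontrivial (Fin n) := Fin.nontrivial_iff_two_le.mpr hn
  rintro _ ⟨x, rfl⟩
  rw [pi_eq_sum_univ' x, map_sum]
  refine Submodule.sum_mem _ fun j _ => ?_
  obtain ⟨i, hij⟩ := exists_ne j
  rw [map_smul]
  exact I.smul_mem _ (apply_single_mem_of_ker_le_range_toLin' hA hf hij)

end

theorem stmt15_general (R : Type*) [CommRing R] [IsLocalRing R]
    (n p s : ℕ) (hn : 2 ≤ n)
    (A : Matrix (Fin n) (Fin p) R)
    (hA : ∀ i j, A i j ∈ (maximalIdeal R) ^ s)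
    (J : Ideal R) (hiso : Nonempty (OmegaOf R A ≃ₗ[R] J)) :
    J ≤ (maximalIdeal R) ^ s := by
  obtain ⟨φ⟩ := hiso
  have hsurj : LinearMap.range (φ.toLinearMap ∘ₗ (LinearMap.range (Matrix.toLin' A)).mkQ) = ⊤ :=
    LinearMap.range_eq_top.mpr (φ.surjective.comp (Submodule.mkQ_surjective _))
  set f := J.subtype ∘ₗ φ.toLinearMap ∘ₗ (LinearMap.range (Matrix.toLin' A)).mkQ
  have hker : LinearMap.ker f = LinearMap.range (Matrix.toLin' A) := by
    rw [LinearMap.ker_comp_of_ker_eq_bot _ J.ker_subtype,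
      LinearMap.ker_comp_of_ker_eq_bot _ φ.ker, Submodule.ker_mkQ]
  have hrange : LinearMap.range f = J := by
    rw [LinearMap.range_comp_of_range_eq_top _ hsurj, J.range_subtype]
  exact hrange ▸ LinearMap.range_le_of_ker_le_range_toLin' hA hn hker.le

/-- in Berger's setting (`I ⊆ 𝔫^{s+1}`, so all entries of the Jacobian
presentation matrix of `Ω_{R/k}` lie in `m^s`), if `Ω_{R/k}` is torsion-free and `J` is an
ideal with `Ω_{R/k} ≅ J`, then `J ⊆ m^s`. -/
theorem stmt15 (R : Type*) [CommRing R] [IsDomain R] [IsNoetherianRing R] [IsLocalRing R]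
    (hdim : ringKrullDim R = 1)
    (n p s : ℕ) (hn : 2 ≤ n) (hs : 1 ≤ s)
    (A : Matrix (Fin n) (Fin p) R)
    (hA : ∀ i j, A i j ∈ (maximalIdeal R) ^ s)
    (htf : Submodule.torsion R (OmegaOf R A) = ⊥)
    (J : Ideal R) (hiso : Nonempty (OmegaOf R A ≃ₗ[R] J)) :
    J ≤ (maximalIdeal R) ^ s :=
  stmt15_general R n p s hn A hA J hiso
end
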